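/- arXiv:1007.3795 — 3 statements merged into one kernel-verified Lean document; each statement's English description precedes it below -/
import Mathlib

section
/- Fix an integer N ≥ 2, a real x with 0 < x < 1, and a nonzero real m. Let A be the Cartan matrix of type A_{N−1} (A_{jj} = 2, A_{jk} = −1 if |j−k| = 1, A_{jk} = 0 otherwise, 1 ≤ j,k ≤ N−1). Define (N−1)×(N−1) real matrices M and I by M_{jk} = [A_{jk}·m]_x / [m]_x and I_{jk} = [min(j,k)·m]_x · [(N − max(j,k))·m]_x / ([m]_x · [N m]_x). Then M·I = I·M = 1 (the identity matrix); i.e. (I_{jk}) is the inverse of the deformed Cartan matrix ([A_{jk}m]_x/[m]_x). -/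
/-!
With `L = log x` we have `[a]_x = sinh (a L) / sinh L`, and the addition formulas for `sinh` give
`[2b][a] = [b]([a+b] + [a-b])` and `[a+b][c] - [a][c-b] = [b][a+c]`.
Since `[-m] = -[m]` and `[0] = 0`, the matrix `M` is tridiagonal with diagonal `[2m]/[m]` and
off-diagonal `-1`. By the first identity, `p ↦ [pm]` and `p ↦ [(N-p)m]` both solve the recurrence
`([2m]/[m]) f(p+1) = f(p) + f(p+2)`. The `q`-th column of `I`, extended to `p = 0` and `p = N`
where it vanishes, is `[pm][(N-q)m]` up to the diagonal and `[qm][(N-p)m]` from there on, divided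
by `[m][Nm]`; so `M` kills it except at the diagonal, where the second identity (with `b = m`)
gives exactly `1`.
-/

noncomputable section

/-- `[a]_x = (x^a - x^{-a})/(x - x⁻¹)` for real `a` (with `x^a` the real power). -/
def brx (x a : ℝ) : ℝ := (x ^ a - x ^ (-a)) / (x - x⁻¹)

open Real Finset

def tridiagonal {R : Type*} [Ring R] (n : ℕ) (c : R) : Matrix (Fin n) (Fin n) R :=
  Matrix.of fun j k => if j = k then c else if (j : ℕ) + 1 = k ∨ (k : ℕ) + 1 = j then -1 else 0

lemma sum_range_tridiagonal_mul {R : Type*} [Ring R] (c : R) {n j : ℕ} (hj : j < n) (v : ℕ → R)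
    (h0 : v 0 = 0) (hn : v (n + 1) = 0) :
    ∑ l ∈ range n, (if j = l then c else if j + 1 = l ∨ l + 1 = j then -1 else 0) * v (l + 1)
      = c * v (j + 1) - v j - v (j + 2) := by
  have hsplit : ∀ l, (if j = l then c else if j + 1 = l ∨ l + 1 = j then -1 else 0) * v (l + 1)
      = (if j = l then c * v (j + 1) else 0) - (if l + 1 = j then v j else 0)
        - (if j + 1 = l then v (j + 2) else 0) := by
    intro l
    split_ifs <;> subst_vars <;> first | omega | simp
  have hbelow : ∑ l ∈ range n, (if l + 1 = j then v j else 0) = v j := by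
    rcases j with _ | j
    · simp [h0]
    · simp [Nat.lt_of_succ_lt hj]
  have habove : ∑ l ∈ range n, (if j + 1 = l then v (j + 2) else 0) = v (j + 2) := by
    rw [sum_ite_eq]
    split_ifs with h
    · rfl
    · rw [show j + 2 = n + 1 by simp at h; omega, hn]
  simp only [hsplit, sum_sub_distrib, sum_ite_eq, mem_range, if_pos hj, hbelow, habove]

lemma tridiagonal_mul_of_apply {R : Type*} [Ring R] {n : ℕ} (c : R) (g : ℕ → ℕ → R)
    (h0 : ∀ k : Fin n, g 0 (k + 1) = 0) (hn : ∀ k : Fin n, g (n + 1) (k + 1) = 0) (j k : Fin n) :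
    (tridiagonal n c * Matrix.of fun p q : Fin n => g (p + 1) (q + 1)) j k
      = c * g (j + 1) (k + 1) - g j (k + 1) - g (j + 2) (k + 1) := by
  rw [Matrix.mul_apply]
  simp only [tridiagonal, Matrix.of_apply, ← Fin.val_inj]
  exact (Fin.sum_univ_eq_sum_range (fun l => (if (j : ℕ) = l then c
      else if (j : ℕ) + 1 = l ∨ l + 1 = j then -1 else 0) * g (l + 1) (k + 1)) n).trans
    (sum_range_tridiagonal_mul c j.isLt (fun p => g p (k + 1)) (h0 k) (hn k))

lemma brx_zero (x : ℝ) : brx x 0 = 0 := by simp [brx]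

lemma brx_neg (x a : ℝ) : brx x (-a) = -brx x a := by
  rw [brx, brx, neg_neg, ← neg_sub, neg_div]

lemma brx_eq_sinh_div {x : ℝ} (hx : 0 < x) (a : ℝ) :
    brx x a = sinh (a * log x) / sinh (log x) := by
  have hden : x - x⁻¹ = exp (log x) - exp (-log x) := by rw [exp_neg, exp_log hx]
  rw [brx, hden, rpow_def_of_pos hx, rpow_def_of_pos hx, mul_neg, mul_comm (log x) a, sinh_eq,
    sinh_eq, div_div_div_cancel_right₀ two_ne_zero]

lemma brx_ne_zero {x : ℝ} (hx0 : 0 < x) (hx1 : x ≠ 1) {a : ℝ} (ha : a ≠ 0) : brx x a ≠ 0 := by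
  have hlog := log_ne_zero_of_pos_of_ne_one hx0 hx1
  rw [brx_eq_sinh_div hx0]
  exact div_ne_zero (sinh_eq_zero.not.mpr (mul_ne_zero ha hlog)) (sinh_eq_zero.not.mpr hlog)

lemma brx_two_mul_mul {x : ℝ} (hx : 0 < x) (a b : ℝ) :
    brx x (2 * b) * brx x a = brx x b * (brx x (a + b) + brx x (a - b)) := by
  simp only [brx_eq_sinh_div hx, add_mul, sub_mul, mul_assoc (2 : ℝ), sinh_two_mul, sinh_add,
    sinh_sub]
  ring

lemma brx_add_mul_sub_mul {x : ℝ} (hx : 0 < x) (a b c : ℝ) :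
    brx x (a + b) * brx x c - brx x a * brx x (c - b) = brx x b * brx x (a + c) := by
  simp only [brx_eq_sinh_div hx, add_mul, sub_mul, sinh_add, sinh_sub]
  ring

lemma of_brx_tridiagonal_mul_div {x m : ℝ} (hm : brx x m ≠ 0) (n : ℕ) :
    (Matrix.of fun j k : Fin n => brx x (tridiagonal n 2 j k * m) / brx x m)
      = tridiagonal n (brx x (2 * m) / brx x m) := by
  ext j k
  simp only [tridiagonal, Matrix.of_apply]
  split_ifs <;> simp [brx_neg, brx_zero, hm]

def deformedCartanInvEntry (x m : ℝ) (N p q : ℕ) : ℝ :=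
  brx x ((min p q : ℕ) * m) * brx x (((N : ℝ) - (max p q : ℕ)) * m)
    / (brx x m * brx x ((N : ℝ) * m))

lemma deformedCartanInvEntry_of_le (x m : ℝ) (N : ℕ) {p q : ℕ} (h : p ≤ q) :
    deformedCartanInvEntry x m N p q
      = brx x (p * m) * brx x ((N - q) * m) / (brx x m * brx x (N * m)) := by
  rw [deformedCartanInvEntry, min_eq_left h, max_eq_right h]

lemma deformedCartanInvEntry_of_ge (x m : ℝ) (N : ℕ) {p q : ℕ} (h : q ≤ p) :
    deformedCartanInvEntry x m N p q
      = brx x (q * m) * brx x ((N - p) * m) / (brx x m * brx x (N * m)) := by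
  rw [deformedCartanInvEntry, min_eq_right h, max_eq_left h]

lemma deformedCartanInvEntry_zero_left (x m : ℝ) (N q : ℕ) :
    deformedCartanInvEntry x m N 0 q = 0 := by
  simp [deformedCartanInvEntry, brx_zero]

lemma deformedCartanInvEntry_self_left (x m : ℝ) {N q : ℕ} (hq : q ≤ N) :
    deformedCartanInvEntry x m N N q = 0 := by
  simp [deformedCartanInvEntry_of_ge x m N hq, brx_zero]

lemma deformedCartanInvEntry_recurrence {x m : ℝ} (hx0 : 0 < x) (hx1 : x ≠ 1) (hm : m ≠ 0)
    {N : ℕ} (hN : N ≠ 0) (p q : ℕ) :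
    brx x (2 * m) / brx x m * deformedCartanInvEntry x m N (p + 1) q
      - deformedCartanInvEntry x m N p q - deformedCartanInvEntry x m N (p + 2) q
      = if p + 1 = q then 1 else 0 := by
  have hbm : brx x m ≠ 0 := brx_ne_zero hx0 hx1 hm
  have hD : brx x m * brx x (N * m) ≠ 0 :=
    mul_ne_zero hbm (brx_ne_zero hx0 hx1 (mul_ne_zero (Nat.cast_ne_zero.mpr hN) hm))
  have hc (a : ℝ) : brx x (2 * m) / brx x m * brx x a = brx x (a + m) + brx x (a - m) := by
    rw [div_mul_eq_mul_div, div_eq_iff hbm, brx_two_mul_mul hx0]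
    ring
  rcases lt_trichotomy (p + 1) q with h | rfl | h
  · rw [deformedCartanInvEntry_of_le x m N h.le, deformedCartanInvEntry_of_le x m N (by omega),
      deformedCartanInvEntry_of_le x m N (show p + 2 ≤ q by omega), if_neg h.ne]
    push_cast
    linear_combination (norm := ring_nf)
      brx x ((N - q) * m) / (brx x m * brx x (N * m)) * hc ((p + 1) * m)
  · rw [deformedCartanInvEntry_of_le x m N le_rfl, deformedCartanInvEntry_of_le x m N (by omega),
      deformedCartanInvEntry_of_ge x m N (show p + 1 ≤ p + 2 by omega), if_pos rfl,
      ← div_self hD]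
    push_cast
    linear_combination (norm := ring_nf)
      brx x ((N - (p + 1)) * m) / (brx x m * brx x (N * m)) * hc ((p + 1) * m)
        + brx_add_mul_sub_mul hx0 ((p + 1) * m) m ((N - (p + 1)) * m) / (brx x m * brx x (N * m))
  · rw [deformedCartanInvEntry_of_ge x m N (show q ≤ p + 1 by omega),
      deformedCartanInvEntry_of_ge x m N (show q ≤ p by omega),
      deformedCartanInvEntry_of_ge x m N (show q ≤ p + 2 by omega), if_neg h.ne']
    push_cast
    linear_combination (norm := ring_nf)
      brx x (q * m) / (brx x m * brx x (N * m)) * hc ((N - (p + 1)) * m)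

/-- The matrix `(I_{jk}) = ([min(j,k)m]_x [(N-max(j,k))m]_x / ([m]_x [Nm]_x))` is the
two-sided inverse of the deformed Cartan matrix `([A_{jk}m]_x/[m]_x)` of type `A_{N-1}`. -/
theorem deformed_cartan_inverse (N : ℕ) (hN : 2 ≤ N) (x : ℝ) (hx0 : 0 < x) (hx1 : x < 1)
    (m : ℝ) (hm : m ≠ 0)
    (A : Matrix (Fin (N - 1)) (Fin (N - 1)) ℝ)
    (hA : A = Matrix.of fun (j k : Fin (N - 1)) =>
      if j = k then 2
      else if (j : ℕ) + 1 = (k : ℕ) ∨ (k : ℕ) + 1 = (j : ℕ) then -1 else 0)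
    (M : Matrix (Fin (N - 1)) (Fin (N - 1)) ℝ)
    (hM : M = Matrix.of fun (j k : Fin (N - 1)) => brx x (A j k * m) / brx x m)
    (I : Matrix (Fin (N - 1)) (Fin (N - 1)) ℝ)
    (hI : I = Matrix.of fun (j k : Fin (N - 1)) =>
      brx x ((min ((j : ℕ) + 1) ((k : ℕ) + 1) : ℕ) * m)
        * brx x (((N : ℝ) - (max ((j : ℕ) + 1) ((k : ℕ) + 1) : ℕ)) * m)
        / (brx x m * brx x ((N : ℝ) * m))) :
    M * I = 1 ∧ I * M = 1 := by
  have hM' : M = tridiagonal (N - 1) (brx x (2 * m) / brx x m) := by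
    rw [hM, hA, ← of_brx_tridiagonal_mul_div (brx_ne_zero hx0 hx1.ne hm)]
    rfl
  have hI' :
      I = Matrix.of fun p q : Fin (N - 1) => deformedCartanInvEntry x m N (p + 1) (q + 1) := by
    rw [hI]
    rfl
  have hN1 : N - 1 + 1 = N := by omega
  have hMI : M * I = 1 := by
    ext j k
    rw [hM', hI', tridiagonal_mul_of_apply _ _ (fun _ ↦ deformedCartanInvEntry_zero_left x m N _)
        (fun k ↦ by rw [hN1]; exact deformedCartanInvEntry_self_left x m (by omega)),
      deformedCartanInvEntry_recurrence hx0 hx1.ne hm (by omega), Matrix.one_apply]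
    simp only [add_left_inj, Fin.val_inj]
  exact ⟨hMI, mul_eq_one_comm.mp hMI⟩
end
end

section
/- Let c, p, p′ ∈ ℝ and let j be an integer, and set q = x^{2r}. Define g(w) = (1 − w^{−2})·(x^{2p+2c+2−j}/w;q)_∞·(x^{−2p′+2r−2c+j}/w;q)_∞ / ((x^{2r−2p−2c−2+j}/w;q)_∞·(x^{2c+2p′−j}/w;q)_∞). Then for every w ∈ ℂ∖{0} at which both denominators are nonzero (for w and for 1/w): g(w)·w·Θ_q(x^{2c+2p−j+2}·w)·Θ_q(x^{2c+2p′−j}/w) + g(1/w)·w^{−1}·Θ_q(x^{2c+2p−j+2}/w)·Θ_q(x^{2c+2p′−j}·w) = 0. (This is the weak equality g_j(w)·w·Θ_{x^{2r}}(x^{2c+2π_{1,j}−j+2}w)·Θ_{x^{2r}}(x^{2c+2π_{1,j+1}−j}/w) ∼_w 0 of the paper, with p = π_{1,j}, p′ = π_{1,j+1}.) -/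
/-!
Writing `q = x^{2r}`, `a = x^{2c+2p-j+2}` and `b = x^{2c+2p'-j}`, the numerator parameters of `g`
are `a` and `q/b` and its denominator parameters are `q/a` and `b`. The denominator of `g(w)`
therefore cancels against the factors `(q/(aw);q)_∞` and `(b/w;q)_∞` of `Θ_q(aw) Θ_q(b/w)`,
leaving `(w - w⁻¹)` times a product that is invariant under `w ↦ w⁻¹`. The identity holds
for arbitrary complex `q`, `a`, `b`.
-/

noncomputable section

/-- `x^w := exp(w · log x)` for a real base `x` and a complex exponent `w`. -/
def cxp (x : ℝ) (w : ℂ) : ℂ := Complex.exp (w * Real.log x)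

/-- The infinite product `(z;p)_∞ = ∏_{n≥0} (1 - z pⁿ)`. -/
def qpoch (z p : ℂ) : ℂ := ∏' n : ℕ, (1 - z * p ^ n)

/-- The theta function `Θ_p(z) = (p;p)_∞ (z;p)_∞ (p/z;p)_∞`. -/
def jtheta (p z : ℂ) : ℂ := qpoch p p * qpoch z p * qpoch (p / z) p

lemma cxp_sub (x : ℝ) (u v : ℂ) : cxp x (u - v) = cxp x u / cxp x v := by
  simp only [cxp, sub_mul, Complex.exp_sub]

def gFactor (q a b v : ℂ) : ℂ :=
  (1 - v⁻¹ ^ 2) * qpoch (a / v) q * qpoch (q / b / v) q /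
    (qpoch (q / a / v) q * qpoch (b / v) q)

lemma gFactor_mul_jtheta_mul_jtheta {q a b v : ℂ} (hqa : qpoch (q / a / v) q ≠ 0)
    (hb : qpoch (b / v) q ≠ 0) :
    gFactor q a b v * v * jtheta q (a * v) * jtheta q (b / v) =
      (v - v⁻¹) * (qpoch q q ^ 2 * qpoch (a / v) q * qpoch (a * v) q *
        qpoch (q / b / v) q * qpoch (q / b * v) q) := by
  have hv : (1 - v⁻¹ ^ 2) * v = v - v⁻¹ := by
    rw [sub_mul, one_mul, sq]
    congr 1
    simpa only [inv_inv] using mul_self_mul_inv v⁻¹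
  calc gFactor q a b v * v * jtheta q (a * v) * jtheta q (b / v)
      = (1 - v⁻¹ ^ 2) * v * (qpoch q q ^ 2 * qpoch (a / v) q * qpoch (a * v) q *
          qpoch (q / b / v) q * qpoch (q / b * v) q) *
          (qpoch (q / a / v) q * qpoch (b / v) q / (qpoch (q / a / v) q * qpoch (b / v) q)) := by
        rw [gFactor, jtheta, jtheta, ← div_div q a v, div_div_eq_mul_div, mul_div_right_comm q v b]
        ring
    _ = _ := by rw [div_self (mul_ne_zero hqa hb), mul_one, hv]

theorem gFactor_weak_equality {q a b w : ℂ}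
    (h₁ : qpoch (q / a / w) q ≠ 0) (h₂ : qpoch (b / w) q ≠ 0)
    (h₃ : qpoch (q / a / w⁻¹) q ≠ 0) (h₄ : qpoch (b / w⁻¹) q ≠ 0) :
    gFactor q a b w * w * jtheta q (a * w) * jtheta q (b / w)
      + gFactor q a b w⁻¹ * w⁻¹ * jtheta q (a / w) * jtheta q (b * w) = 0 := by
  rw [div_eq_mul_inv a w, ← div_inv_eq_mul b w, gFactor_mul_jtheta_mul_jtheta h₁ h₂,
    gFactor_mul_jtheta_mul_jtheta h₃ h₄]
  simp only [inv_inv, div_inv_eq_mul, ← div_eq_mul_inv]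
  ring

theorem weak_equality_g_general (x : ℝ)
    (r : ℝ) (c p p' : ℝ) (j : ℤ)
    (g : ℂ → ℂ)
    (hg : g = fun v => (1 - (v⁻¹) ^ 2) *
      qpoch (cxp x (2 * p + 2 * c + 2 - j) / v) (cxp x (2 * r)) *
      qpoch (cxp x (-2 * p' + 2 * r - 2 * c + j) / v) (cxp x (2 * r)) /
      (qpoch (cxp x (2 * r - 2 * p - 2 * c - 2 + j) / v) (cxp x (2 * r)) *
       qpoch (cxp x (2 * c + 2 * p' - j) / v) (cxp x (2 * r))))
    (w : ℂ)
    (hd1 : qpoch (cxp x (2 * r - 2 * p - 2 * c - 2 + j) / w) (cxp x (2 * r)) ≠ 0)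
    (hd2 : qpoch (cxp x (2 * c + 2 * p' - j) / w) (cxp x (2 * r)) ≠ 0)
    (hd3 : qpoch (cxp x (2 * r - 2 * p - 2 * c - 2 + j) / w⁻¹) (cxp x (2 * r)) ≠ 0)
    (hd4 : qpoch (cxp x (2 * c + 2 * p' - j) / w⁻¹) (cxp x (2 * r)) ≠ 0) :
    g w * w * jtheta (cxp x (2 * r)) (cxp x (2 * c + 2 * p - j + 2) * w) *
        jtheta (cxp x (2 * r)) (cxp x (2 * c + 2 * p' - j) / w)
    + g w⁻¹ * w⁻¹ * jtheta (cxp x (2 * r)) (cxp x (2 * c + 2 * p - j + 2) / w) *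
        jtheta (cxp x (2 * r)) (cxp x (2 * c + 2 * p' - j) * w) = 0 := by
  have ha : cxp x (2 * p + 2 * c + 2 - j) = cxp x (2 * c + 2 * p - j + 2) := by
    congr 1; ring
  have hqa : cxp x (2 * r - 2 * p - 2 * c - 2 + j)
      = cxp x (2 * r) / cxp x (2 * c + 2 * p - j + 2) := by
    rw [← cxp_sub]; congr 1; ring
  have hqb : cxp x (-2 * p' + 2 * r - 2 * c + j)
      = cxp x (2 * r) / cxp x (2 * c + 2 * p' - j) := by
    rw [← cxp_sub]; congr 1; ring
  rw [hqa] at hd1 hd3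
  rw [ha, hqa, hqb] at hg
  subst hg
  exact gFactor_weak_equality hd1 hd2 hd3 hd4

/-- The weak equality `g_j(w)·w·Θ_q(x^{2c+2p-j+2}w)·Θ_q(x^{2c+2p'-j}/w) ∼_w 0`:
the sum of the displayed expression at `w` and at `1/w` vanishes. -/
theorem weak_equality_g (x : ℝ) (hx0 : 0 < x) (hx1 : x < 1)
    (r : ℝ) (hr : 0 < r) (c p p' : ℝ) (j : ℤ)
    (g : ℂ → ℂ)
    (hg : g = fun v => (1 - (v⁻¹) ^ 2) *
      qpoch (cxp x (2 * p + 2 * c + 2 - j) / v) (cxp x (2 * r)) *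
      qpoch (cxp x (-2 * p' + 2 * r - 2 * c + j) / v) (cxp x (2 * r)) /
      (qpoch (cxp x (2 * r - 2 * p - 2 * c - 2 + j) / v) (cxp x (2 * r)) *
       qpoch (cxp x (2 * c + 2 * p' - j) / v) (cxp x (2 * r))))
    (w : ℂ) (hw : w ≠ 0)
    (hd1 : qpoch (cxp x (2 * r - 2 * p - 2 * c - 2 + j) / w) (cxp x (2 * r)) ≠ 0)
    (hd2 : qpoch (cxp x (2 * c + 2 * p' - j) / w) (cxp x (2 * r)) ≠ 0)
    (hd3 : qpoch (cxp x (2 * r - 2 * p - 2 * c - 2 + j) / w⁻¹) (cxp x (2 * r)) ≠ 0)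
    (hd4 : qpoch (cxp x (2 * c + 2 * p' - j) / w⁻¹) (cxp x (2 * r)) ≠ 0) :
    g w * w * jtheta (cxp x (2 * r)) (cxp x (2 * c + 2 * p - j + 2) * w) *
        jtheta (cxp x (2 * r)) (cxp x (2 * c + 2 * p' - j) / w)
    + g w⁻¹ * w⁻¹ * jtheta (cxp x (2 * r)) (cxp x (2 * c + 2 * p - j + 2) / w) *
        jtheta (cxp x (2 * r)) (cxp x (2 * c + 2 * p' - j) * w) = 0 :=
  weak_equality_g_general x r c p p' j g hg w hd1 hd2 hd3 hd4
end
end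

section
/- Let N ≥ 2 be an integer, let c, p, p′ ∈ ℝ, let j be an integer, and set q = x^{2r}. Define g*(w) = (1 − w²)·(x^{2c+2−N+j+2p′}·w;q)_∞·(x^{2r−2c+N−j−2p}·w;q)_∞ / ((x^{2r−2c−2+N−j−2p′}·w;q)_∞·(x^{2c−N+j+2p}·w;q)_∞). Then for every w ∈ ℂ∖{0} at which the denominators are nonzero (for w and for 1/w): g*(1/w)·w·Θ_q(x^{2c−N+j+2p}/w)·Θ_q(x^{2c+2−N+j+2p′}·w) + g*(w)·w^{−1}·Θ_q(x^{2c−N+j+2p}·w)·Θ_q(x^{2c+2−N+j+2p′}/w) = 0. (This is the weak equality g_j^*(1/w)·w·Θ_{x^{2r}}(x^{2c−N+j+2π_{1,j}}/w)·Θ_{x^{2r}}(x^{2c+2−N+j+2π_{1,j+1}}w) ∼_w 0, with p = π_{1,j}, p′ = π_{1,j+1}.) -/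
noncomputable section

def gstar (q a b v : ℂ) : ℂ :=
  (1 - v ^ 2) * qpoch (b * v) q * qpoch (q / a * v) q / (qpoch (q / b * v) q * qpoch (a * v) q)

lemma jtheta_mul (q a v : ℂ) :
    jtheta q (a * v) = qpoch q q * qpoch (a * v) q * qpoch (q / a * v⁻¹) q := by
  rw [jtheta, div_mul_eq_div_div, div_eq_mul_inv (q / a)]

lemma gstar_mul_inv_mul_jtheta_mul_jtheta (q a b v : ℂ)
    (hb : qpoch (q / b * v) q ≠ 0) (ha : qpoch (a * v) q ≠ 0) :
    gstar q a b v * v⁻¹ * jtheta q (a * v) * jtheta q (b / v) =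
      (v⁻¹ - v) * qpoch q q ^ 2 * qpoch (b * v) q * qpoch (b * v⁻¹) q *
        qpoch (q / a * v) q * qpoch (q / a * v⁻¹) q := by
  have hv : (1 - v ^ 2) * v⁻¹ = v⁻¹ - v := by
    rcases eq_or_ne v 0 with rfl | hv
    · simp
    · field_simp
  rw [div_eq_mul_inv b, jtheta_mul, jtheta_mul, inv_inv, gstar, ← hv]
  generalize qpoch (q / b * v) q = D at hb ⊢
  generalize qpoch (a * v) q = A at ha ⊢
  field_simp

theorem weak_equality_g_star_general (x : ℝ)
    (r : ℝ) (N : ℕ) (c p p' : ℝ) (j : ℤ)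
    (gs : ℂ → ℂ)
    (hgs : gs = fun v => (1 - v ^ 2) *
      qpoch (cxp x (2 * c + 2 - N + j + 2 * p') * v) (cxp x (2 * r)) *
      qpoch (cxp x (2 * r - 2 * c + N - j - 2 * p) * v) (cxp x (2 * r)) /
      (qpoch (cxp x (2 * r - 2 * c - 2 + N - j - 2 * p') * v) (cxp x (2 * r)) *
       qpoch (cxp x (2 * c - N + j + 2 * p) * v) (cxp x (2 * r))))
    (w : ℂ)
    (hd1 : qpoch (cxp x (2 * r - 2 * c - 2 + N - j - 2 * p') * w) (cxp x (2 * r)) ≠ 0)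
    (hd2 : qpoch (cxp x (2 * c - N + j + 2 * p) * w) (cxp x (2 * r)) ≠ 0)
    (hd3 : qpoch (cxp x (2 * r - 2 * c - 2 + N - j - 2 * p') * w⁻¹) (cxp x (2 * r)) ≠ 0)
    (hd4 : qpoch (cxp x (2 * c - N + j + 2 * p) * w⁻¹) (cxp x (2 * r)) ≠ 0) :
    gs w⁻¹ * w * jtheta (cxp x (2 * r)) (cxp x (2 * c - N + j + 2 * p) / w) *
        jtheta (cxp x (2 * r)) (cxp x (2 * c + 2 - N + j + 2 * p') * w)
    + gs w * w⁻¹ * jtheta (cxp x (2 * r)) (cxp x (2 * c - N + j + 2 * p) * w) *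
        jtheta (cxp x (2 * r)) (cxp x (2 * c + 2 - N + j + 2 * p') / w) = 0 := by
  set q := cxp x (2 * r)
  set a := cxp x (2 * c - N + j + 2 * p)
  set b := cxp x (2 * c + 2 - N + j + 2 * p')
  have hqa : cxp x (2 * r - 2 * c + N - j - 2 * p) = q / a := by
    rw [← cxp_sub]; ring_nf
  have hqb : cxp x (2 * r - 2 * c - 2 + N - j - 2 * p') = q / b := by
    rw [← cxp_sub]; ring_nf
  have hgs' : gs = gstar q a b := by
    rw [hgs, hqa, hqb]; rfl
  rw [hqb] at hd1 hd3
  have hterm := gstar_mul_inv_mul_jtheta_mul_jtheta q a b w hd1 hd2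
  have hterm_inv := gstar_mul_inv_mul_jtheta_mul_jtheta q a b w⁻¹ hd3 hd4
  rw [inv_inv, ← div_eq_mul_inv, div_inv_eq_mul] at hterm_inv
  rw [hgs', hterm, hterm_inv]
  ring

/-- The weak equality
`g*(1/w)·w·Θ_q(x^{2c-N+j+2p}/w)·Θ_q(x^{2c+2-N+j+2p'}w) ∼_w 0`:
the sum of the displayed expression at `w` and at `1/w` vanishes. -/
theorem weak_equality_g_star (x : ℝ) (hx0 : 0 < x) (hx1 : x < 1)
    (r : ℝ) (hr : 0 < r) (N : ℕ) (hN : 2 ≤ N) (c p p' : ℝ) (j : ℤ)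
    (gs : ℂ → ℂ)
    (hgs : gs = fun v => (1 - v ^ 2) *
      qpoch (cxp x (2 * c + 2 - N + j + 2 * p') * v) (cxp x (2 * r)) *
      qpoch (cxp x (2 * r - 2 * c + N - j - 2 * p) * v) (cxp x (2 * r)) /
      (qpoch (cxp x (2 * r - 2 * c - 2 + N - j - 2 * p') * v) (cxp x (2 * r)) *
       qpoch (cxp x (2 * c - N + j + 2 * p) * v) (cxp x (2 * r))))
    (w : ℂ) (hw : w ≠ 0)
    (hd1 : qpoch (cxp x (2 * r - 2 * c - 2 + N - j - 2 * p') * w) (cxp x (2 * r)) ≠ 0)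
    (hd2 : qpoch (cxp x (2 * c - N + j + 2 * p) * w) (cxp x (2 * r)) ≠ 0)
    (hd3 : qpoch (cxp x (2 * r - 2 * c - 2 + N - j - 2 * p') * w⁻¹) (cxp x (2 * r)) ≠ 0)
    (hd4 : qpoch (cxp x (2 * c - N + j + 2 * p) * w⁻¹) (cxp x (2 * r)) ≠ 0) :
    gs w⁻¹ * w * jtheta (cxp x (2 * r)) (cxp x (2 * c - N + j + 2 * p) / w) *
        jtheta (cxp x (2 * r)) (cxp x (2 * c + 2 - N + j + 2 * p') * w)
    + gs w * w⁻¹ * jtheta (cxp x (2 * r)) (cxp x (2 * c - N + j + 2 * p) * w) *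
        jtheta (cxp x (2 * r)) (cxp x (2 * c + 2 - N + j + 2 * p') / w) = 0 :=
  weak_equality_g_star_general x r N c p p' j gs hgs w hd1 hd2 hd3 hd4
end
end
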